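/- Let F: X → ℝ≥0 be differentiable, monotone, and weakly DR-submodular with parameter γ, and let K ⊆ X be convex. If x ∈ K is a stationary point of F over K (i.e., ⟨∇F(x), y - x⟩ ≤ 0 for all y ∈ K), then F(x) ≥ (γ²/(1+γ²))·sup_{y∈K} F(y). -/

import Mathlib

/-!
Fix `y ∈ K` and compare `x` with `u = x ⊔ y` and `d = x ⊓ y` (coordinatewise). By the mean value
theorem along the segments `[x, u]` and `[d, x]`, weak DR-submodularity gives
`γ (F u - F x) ≤ ⟪∇F x, u - x⟫` and `γ ⟪∇F x, x - d⟫ ≤ F x - F d`.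
Since `u - x = (y - x) + (x - d)`, stationarity yields `γ² (F u - F x) ≤ F x - F d ≤ F x`,
and monotonicity gives `F y ≤ F u`.
-/

open Set
open scoped RealInnerProductSpace

variable {ι : Type*}

theorem exists_mem_segment_sub_eq_inner_gradient {E : Type*} [NormedAddCommGroup E]
    [InnerProductSpace ℝ E] [CompleteSpace E] {F : E → ℝ} {g : E → E} {p q : E}
    (hF : ∀ w ∈ segment ℝ p q, HasGradientAt F (g w) w) :
    ∃ w ∈ segment ℝ p q, F q - F p = ⟪g w, q - p⟫ :=
  domain_mvt (fun w hw => (hF w hw).hasFDerivAt.hasFDerivWithinAt) (convex_segment p q)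
    (left_mem_segment ℝ p q) (right_mem_segment ℝ p q)

theorem EuclideanSpace.real_inner_eq_sum [Fintype ι] (v w : EuclideanSpace ℝ ι) :
    ⟪v, w⟫ = ∑ i, v i * w i := by
  simp only [PiLp.inner_apply, RCLike.inner_apply, conj_trivial, mul_comm]

theorem EuclideanSpace.real_inner_le_inner_of_le [Fintype ι] {u v d : EuclideanSpace ℝ ι}
    (huv : ∀ i, u i ≤ v i) (hd : ∀ i, 0 ≤ d i) : ⟪u, d⟫ ≤ ⟪v, d⟫ := by
  simp only [EuclideanSpace.real_inner_eq_sum]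
  exact Finset.sum_le_sum fun i _ => mul_le_mul_of_nonneg_right (huv i) (hd i)

def box (l u : ι → ℝ) : Set (EuclideanSpace ℝ ι) := {x | ∀ i, x i ∈ Icc (l i) (u i)}

theorem convex_box (l u : ι → ℝ) : Convex ℝ (box l u) :=
  fun _ hx _ hy _ _ hs ht hst i => by simpa using convex_Icc _ _ (hx i) (hy i) hs ht hst

theorem segment_subset_box {l u : ι → ℝ} {p q : EuclideanSpace ℝ ι} (hp : p ∈ box l u)
    (hq : q ∈ box l u) (hpq : ∀ i, p i ≤ q i) :
    segment ℝ p q ⊆ box l u ∩ box (fun i => p i) (fun i => q i) :=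
  (convex_box l u |>.inter (convex_box _ _)).segment_subset ⟨hp, fun i => ⟨le_rfl, hpq i⟩⟩
    ⟨hq, fun i => ⟨hpq i, le_rfl⟩⟩

section WeaklyDRSubmodular

variable [Fintype ι] {a b : ι → ℝ} {F : EuclideanSpace ℝ ι → ℝ}
  {g : EuclideanSpace ℝ ι → EuclideanSpace ℝ ι} {γ : ℝ}

theorem mul_sub_le_inner_gradient (hdiff : ∀ x ∈ box a b, HasGradientAt F (g x) x)
    (hweak : ∀ x ∈ box a b, ∀ y ∈ box a b, (∀ i, x i ≤ y i) → ∀ i, γ * g y i ≤ g x i)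
    {x z : EuclideanSpace ℝ ι} (hx : x ∈ box a b) (hz : z ∈ box a b) (hxz : ∀ i, x i ≤ z i) :
    γ * (F z - F x) ≤ ⟪g x, z - x⟫ := by
  have hseg := segment_subset_box hx hz hxz
  obtain ⟨w, hw, hmvt⟩ := exists_mem_segment_sub_eq_inner_gradient fun w hw =>
    hdiff w (hseg hw).1
  rw [hmvt, ← real_inner_smul_left]
  refine EuclideanSpace.real_inner_le_inner_of_le (fun i => ?_) fun i => ?_
  · simpa using hweak x hx w (hseg hw).1 (fun j => ((hseg hw).2 j).1) i
  · simpa using hxz i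

theorem mul_inner_gradient_le_sub (hdiff : ∀ x ∈ box a b, HasGradientAt F (g x) x)
    (hweak : ∀ x ∈ box a b, ∀ y ∈ box a b, (∀ i, x i ≤ y i) → ∀ i, γ * g y i ≤ g x i)
    {x w : EuclideanSpace ℝ ι} (hx : x ∈ box a b) (hw : w ∈ box a b) (hwx : ∀ i, w i ≤ x i) :
    γ * ⟪g x, x - w⟫ ≤ F x - F w := by
  have hseg := segment_subset_box hw hx hwx
  obtain ⟨v, hv, hmvt⟩ := exists_mem_segment_sub_eq_inner_gradient fun v hv =>
    hdiff v (hseg hv).1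
  rw [hmvt, ← real_inner_smul_left]
  refine EuclideanSpace.real_inner_le_inner_of_le (fun i => ?_) fun i => ?_
  · simpa using hweak v (hseg hv).1 x hx (fun j => ((hseg hv).2 j).2) i
  · simpa using hwx i

theorem sq_mul_le_one_add_sq_mul_of_inner_gradient_nonpos (hF0 : ∀ x ∈ box a b, 0 ≤ F x)
    (hdiff : ∀ x ∈ box a b, HasGradientAt F (g x) x)
    (hmono : ∀ x ∈ box a b, ∀ y ∈ box a b, (∀ i, x i ≤ y i) → F x ≤ F y) (hγ : 0 ≤ γ)
    (hweak : ∀ x ∈ box a b, ∀ y ∈ box a b, (∀ i, x i ≤ y i) → ∀ i, γ * g y i ≤ g x i)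
    {x y : EuclideanSpace ℝ ι} (hx : x ∈ box a b) (hy : y ∈ box a b) (hstat : ⟪g x, y - x⟫ ≤ 0) :
    γ ^ 2 * F y ≤ (1 + γ ^ 2) * F x := by
  set u : EuclideanSpace ℝ ι := WithLp.toLp 2 fun i => max (x i) (y i)
  set d : EuclideanSpace ℝ ι := WithLp.toLp 2 fun i => min (x i) (y i)
  have hu : u ∈ box a b := fun i => ⟨le_max_of_le_left (hx i).1, max_le (hx i).2 (hy i).2⟩
  have hd : d ∈ box a b := fun i => ⟨le_min (hx i).1 (hy i).1, min_le_of_left_le (hx i).2⟩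
  have hsplit : u - x = (y - x) + (x - d) := by
    ext i
    simp only [u, d, PiLp.sub_apply, PiLp.add_apply]
    linarith [max_add_min (x i) (y i)]
  have hup := mul_sub_le_inner_gradient hdiff hweak hx hu fun i => le_max_left (x i) (y i)
  have hdown := mul_inner_gradient_le_sub hdiff hweak hx hd fun i => min_le_left (x i) (y i)
  have hyu := hmono y hy u hu fun i => le_max_right (x i) (y i)
  rw [hsplit, inner_add_right] at hup
  linarith [hF0 d hd, mul_le_mul_of_nonneg_left hup hγ, mul_le_mul_of_nonneg_left hyu (sq_nonneg γ),
    mul_nonpos_of_nonneg_of_nonpos hγ hstat]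

end WeaklyDRSubmodular

theorem stmt_3_general (n : ℕ) (a b : Fin n → ℝ)
    (X : Set (EuclideanSpace ℝ (Fin n)))
    (hX : X = {x : EuclideanSpace ℝ (Fin n) | ∀ i, x i ∈ Set.Icc (a i) (b i)})
    (F : EuclideanSpace ℝ (Fin n) → ℝ)
    (g : EuclideanSpace ℝ (Fin n) → EuclideanSpace ℝ (Fin n))
    (hF0 : ∀ x ∈ X, 0 ≤ F x)
    (hdiff : ∀ x ∈ X, HasGradientAt F (g x) x)
    (hmono : ∀ x ∈ X, ∀ y ∈ X, (∀ i, x i ≤ y i) → F x ≤ F y)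
    (γ : ℝ) (hγ : 0 < γ)
    (hweak : ∀ x ∈ X, ∀ y ∈ X, (∀ i, x i ≤ y i) → ∀ i, γ * g y i ≤ g x i)
    (K : Set (EuclideanSpace ℝ (Fin n))) (hKX : K ⊆ X)
    (x : EuclideanSpace ℝ (Fin n)) (hx : x ∈ K)
    (hstat : ∀ y ∈ K, ∑ i, g x i * (y i - x i) ≤ 0) :
    γ ^ 2 / (1 + γ ^ 2) * sSup (F '' K) ≤ F x := by
  change X = box a b at hX
  subst hX
  have hγ2 : 0 < γ ^ 2 := by positivity
  have hsup : sSup (F '' K) ≤ (1 + γ ^ 2) * F x / γ ^ 2 := by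
    refine csSup_le ⟨F x, mem_image_of_mem F hx⟩ (forall_mem_image.2 fun y hy => ?_)
    have hstat' : ⟪g x, y - x⟫ ≤ 0 := by
      simpa only [EuclideanSpace.real_inner_eq_sum, PiLp.sub_apply] using hstat y hy
    exact (le_div_iff₀' hγ2).2 <| sq_mul_le_one_add_sq_mul_of_inner_gradient_nonpos hF0 hdiff hmono
      hγ.le hweak (hKX hx) (hKX hy) hstat'
  rw [div_mul_eq_mul_div, div_le_iff₀ (by positivity)]
  linarith [(le_div_iff₀' hγ2).1 hsup]

/-- Stationary points of a monotone, weakly DR-submodular function `F`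
(with parameter `γ`) over a convex set `K ⊆ X` satisfy
`F x ≥ (γ²/(1+γ²)) · sup_{y ∈ K} F y`. -/
theorem stmt_3 (n : ℕ) (a b : Fin n → ℝ) (ha : ∀ i, 0 ≤ a i)
    (X : Set (EuclideanSpace ℝ (Fin n)))
    (hX : X = {x : EuclideanSpace ℝ (Fin n) | ∀ i, x i ∈ Set.Icc (a i) (b i)})
    (F : EuclideanSpace ℝ (Fin n) → ℝ)
    (g : EuclideanSpace ℝ (Fin n) → EuclideanSpace ℝ (Fin n))
    (hF0 : ∀ x ∈ X, 0 ≤ F x)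
    (hdiff : ∀ x ∈ X, HasGradientAt F (g x) x)
    (hmono : ∀ x ∈ X, ∀ y ∈ X, (∀ i, x i ≤ y i) → F x ≤ F y)
    (γ : ℝ) (hγ : 0 < γ)
    (hweak : ∀ x ∈ X, ∀ y ∈ X, (∀ i, x i ≤ y i) → ∀ i, γ * g y i ≤ g x i)
    (K : Set (EuclideanSpace ℝ (Fin n))) (hKX : K ⊆ X) (hK : Convex ℝ K)
    (hbdd : BddAbove (F '' K))
    (x : EuclideanSpace ℝ (Fin n)) (hx : x ∈ K)
    (hstat : ∀ y ∈ K, ∑ i, g x i * (y i - x i) ≤ 0) :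
    γ ^ 2 / (1 + γ ^ 2) * sSup (F '' K) ≤ F x :=
  stmt_3_general n a b X hX F g hF0 hdiff hmono γ hγ hweak K hKX x hx hstat
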